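/- arXiv:1503.00984 — 3 statements merged into one kernel-verified Lean document; each statement's English description precedes it below -/
import Mathlib

section
/- (Equation (weak-ldp-1): left tail is super-exponentially small) For every x < b_w one has limsup_{n→∞} (1/n) log P_n(λ_n* ≤ x) = −∞. -/
/-! If every eigenvalue is at most `x`, the empirical measure integrates the ramp
`t ↦ min 1 (t - x)⁺` to zero. Such measures form a weakly closed set `F`, and `F` misses the
equilibrium measure `μ_w`, which charges `(x, ∞)` because `x < b_w`. A good rate function whose
only zero is `μ_w` is bounded below on `F` by some `c > 0`, so the LDP upper bound gives
`P_n(λ_n* ≤ x) ≤ exp (-c n² / 2)` for large `n`: at speed `n` this is super-exponentially small. -/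

open MeasureTheory Filter Set Topology
open scoped ENNReal NNReal

/-- The Dirac measure as a finite measure. -/
noncomputable def diracFM (x : ℝ) : MeasureTheory.FiniteMeasure ℝ :=
  ⟨MeasureTheory.Measure.dirac x, inferInstance⟩

/-- The empirical measure `(1/n) ∑_{j=1}^m δ_{λ_j}` as a finite measure. -/
noncomputable def empFM (n : ℕ) {m : ℕ} (lam : Fin m → ℝ) : MeasureTheory.FiniteMeasure ℝ :=
  (n : NNReal)⁻¹ • ∑ j : Fin m, diracFM (lam j)

/-- The interaction term `∏_{i<j} |λ_i - λ_j| |λ_i^θ - λ_j^θ|`. -/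
def vandTheta (θ : ℕ) {m : ℕ} (lam : Fin m → ℝ) : ℝ :=
  ∏ i : Fin m, ∏ j : Fin m, if i < j then |lam i - lam j| * |lam i ^ θ - lam j ^ θ| else 1

/-- The (topological) support of a Borel measure on `ℝ`. -/
def msupport (μ : MeasureTheory.Measure ℝ) : Set ℝ := {x : ℝ | ∀ U ∈ nhds x, μ U ≠ 0}

open scoped BoundedContinuousFunction

namespace MeasureTheory.FiniteMeasure

variable {Ω : Type*} [TopologicalSpace Ω] [MeasurableSpace Ω] [OpensMeasurableSpace Ω]

theorem testAgainstNN_eq_zero_iff (μ : FiniteMeasure Ω) (f : Ω →ᵇ ℝ≥0) :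
    μ.testAgainstNN f = 0 ↔ (μ : Measure Ω) {x | f x ≠ 0} = 0 := by
  have hf : Measurable fun x => (f x : ℝ≥0∞) := by fun_prop
  rw [← ENNReal.coe_eq_zero, testAgainstNN_coe_eq, lintegral_eq_zero_iff hf,
    EventuallyEq, ae_iff]
  simp

end MeasureTheory.FiniteMeasure

theorem empFM_apply_eq_zero_of_forall_notMem (n : ℕ) {m : ℕ} {lam : Fin m → ℝ} {s : Set ℝ}
    (hs : ∀ j, lam j ∉ s) : (empFM n lam : Measure ℝ) s = 0 := by
  rw [empFM, FiniteMeasure.toMeasure_smul, FiniteMeasure.toMeasure_sum]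
  simp [diracFM, hs]

noncomputable def rampAbove (x : ℝ) : ℝ →ᵇ ℝ≥0 :=
  BoundedContinuousFunction.mkOfBound
    ⟨fun t => min 1 (Real.toNNReal (t - x)), by fun_prop⟩ 1 fun _ _ =>
      Real.dist_le_of_mem_Icc_01 ⟨NNReal.coe_nonneg _, NNReal.coe_le_one.2 (min_le_left _ _)⟩
        ⟨NNReal.coe_nonneg _, NNReal.coe_le_one.2 (min_le_left _ _)⟩

theorem rampAbove_eq_zero_iff {x t : ℝ} : rampAbove x t = 0 ↔ t ≤ x := by
  change min 1 (t - x).toNNReal = 0 ↔ t ≤ x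
  simp

theorem LowerSemicontinuous.biInf_pos_of_isClosed {X : Type*} [TopologicalSpace X]
    {J : X → ℝ≥0∞} (hJ : LowerSemicontinuous J) (hJ1 : IsCompact {x | J x ≤ 1}) {F : Set X}
    (hF : IsClosed F) (hJF : ∀ x ∈ F, J x ≠ 0) : 0 < ⨅ x ∈ F, J x := by
  by_cases hne : ({x | J x ≤ 1} ∩ F).Nonempty
  · obtain ⟨a, ⟨ha1, haF⟩, hmin⟩ :=
      hJ.lowerSemicontinuousOn _ |>.exists_isMinOn hne (hJ1.inter_right hF)
    refine (pos_iff_ne_zero.2 (hJF a haF)).trans_le (le_iInf₂ fun x hx => ?_)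
    by_cases hx1 : J x ≤ 1
    · exact hmin ⟨hx1, hx⟩
    · exact ha1.trans (le_of_not_ge hx1)
  · refine zero_lt_one.trans_le (le_iInf₂ fun x hx => ?_)
    by_contra h
    exact hne ⟨x, (not_le.1 h).le, hx⟩

theorem limsup_inv_mul_log_eq_bot_of_limsup_inv_sq_mul_log_neg {a b : ℕ → ℝ≥0∞}
    (hba : ∀ n, b n ≤ a n)
    (h : limsup (fun n : ℕ => (((n : ℝ) ^ 2)⁻¹ : EReal) * ENNReal.log (a n)) atTop < 0) :
    limsup (fun n : ℕ => ((n : ℝ)⁻¹ : EReal) * ENNReal.log (b n)) atTop = ⊥ := by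
  obtain ⟨r, hlim, hr0⟩ := EReal.exists_between_coe_real h
  have hr : r < 0 := by exact_mod_cast hr0
  refine Tendsto.limsup_eq (EReal.tendsto_nhds_bot_iff_real.2 fun M => ?_)
  have hnr : Tendsto (fun n : ℕ => (n : ℝ) * r) atTop atBot :=
    tendsto_natCast_atTop_atTop.atTop_mul_const_of_neg hr
  filter_upwards [eventually_lt_of_limsup_lt hlim, hnr.eventually_lt_atBot M,
    eventually_ne_atTop 0] with n hn hnM hn_ne
  have hn0 : (n : ℝ) ≠ 0 := Nat.cast_ne_zero.2 hn_ne
  have hsq : (0 : EReal) ≤ (((n : ℝ) ^ 2)⁻¹ : EReal) :=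
    EReal.inv_nonneg_of_nonneg (pow_nonneg (EReal.coe_nonneg.2 n.cast_nonneg) 2)
  calc ((n : ℝ)⁻¹ : EReal) * ENNReal.log (b n)
      = (n : ℝ) * ((((n : ℝ) ^ 2)⁻¹ : EReal) * ENNReal.log (b n)) := by
        rw [← mul_assoc, ← EReal.coe_pow, ← EReal.coe_inv, ← EReal.coe_inv, ← EReal.coe_mul]
        congr 2
        field_simp
    _ ≤ (n : ℝ) * r := by
        gcongr
        exact (mul_le_mul_of_nonneg_left (ENNReal.log_monotone (hba n)) hsq).trans hn.le
    _ < M := by exact_mod_cast hnM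

theorem largest_eigenvalue_left_tail_general
    -- basic data
    (p : ℕ → ℕ)
    -- the eigenvalue distributions
    (P : (n : ℕ) → Measure (Fin (p n) → ℝ))
    -- LDP for the empirical measures with speed n², good rate function J, unique minimiser μw
    (J : MeasureTheory.FiniteMeasure ℝ → ℝ≥0∞) (hJlsc : LowerSemicontinuous J)
    (hJgood : ∀ c : ℝ≥0∞, c ≠ ⊤ → IsCompact {μ : MeasureTheory.FiniteMeasure ℝ | J μ ≤ c})
    (hLDPup : ∀ F : Set (MeasureTheory.FiniteMeasure ℝ), IsClosed F →
      Filter.limsup (fun n : ℕ => (((n : ℝ) ^ 2)⁻¹ : EReal) *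
          ENNReal.log (P n {lam | empFM n lam ∈ F})) atTop
        ≤ - ⨅ μ ∈ F, (J μ : EReal))
    (μw : Measure ℝ) [IsProbabilityMeasure μw]
    (hμwmin : J ⟨μw, inferInstance⟩ = 0 ∧
      ∀ μ : MeasureTheory.FiniteMeasure ℝ, J μ = 0 → μ = ⟨μw, inferInstance⟩)
    (bw : ℝ) (hbw : IsLUB (msupport μw) bw) :
    -- conclusion: for every x < bw, limsup (1/n) log P_n(λ_n* ≤ x) = -∞
    ∀ x : ℝ, x < bw →
      Filter.limsup (fun n : ℕ => ((n : ℝ)⁻¹ : EReal) *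
        ENNReal.log (P n {lam | (⨆ j, lam j) ≤ x})) atTop = (⊥ : EReal) := by
  intro x hx
  obtain ⟨y, hy, hxy, -⟩ := hbw.exists_between hx
  set F := {μ : FiniteMeasure ℝ | μ.testAgainstNN (rampAbove x) = 0}
  have hF : IsClosed F :=
    isClosed_singleton.preimage (FiniteMeasure.continuous_testAgainstNN_eval _)
  have hμwF : (⟨μw, inferInstance⟩ : FiniteMeasure ℝ) ∉ F := fun hμw => by
    have hIoi := (FiniteMeasure.testAgainstNN_eq_zero_iff _ _).1 hμw
    simp only [ne_eq, rampAbove_eq_zero_iff, not_le] at hIoi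
    exact hy (Ioi x) (Ioi_mem_nhds hxy) hIoi
  have hrate : 0 < ⨅ μ ∈ F, J μ := hJlsc.biInf_pos_of_isClosed (hJgood 1 ENNReal.one_ne_top) hF
    fun μ hμF hJμ => hμwF (hμwmin.2 μ hJμ ▸ hμF)
  have hevent (n : ℕ) : {lam : Fin (p n) → ℝ | (⨆ j, lam j) ≤ x} ⊆ {lam | empFM n lam ∈ F} :=
    fun lam hlam => by
      refine (FiniteMeasure.testAgainstNN_eq_zero_iff _ _).2
        (empFM_apply_eq_zero_of_forall_notMem n fun j => ?_)
      simpa [rampAbove_eq_zero_iff] using (le_ciSup (finite_range lam).bddAbove j).trans hlam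
  refine limsup_inv_mul_log_eq_bot_of_limsup_inv_sq_mul_log_neg (fun n => measure_mono (hevent n))
    ((hLDPup F hF).trans_lt (EReal.neg_lt_zero.2 ?_))
  exact (EReal.coe_ennreal_pos.2 hrate).trans_le
    (le_iInf₂ fun μ hμ => EReal.coe_ennreal_le_coe_ennreal_iff.2 (iInf₂_le μ hμ))

theorem largest_eigenvalue_left_tail
    -- basic data
    (θ : ℕ) (hθ : 1 ≤ θ) (κ : ℝ) (hκ : 0 < κ)
    (Sig : Set ℝ) (hSigClosed : IsClosed Sig) (hSigPos : Even θ → Sig ⊆ Set.Ici (0 : ℝ))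
    (p : ℕ → ℕ) (hpκ : Tendsto (fun n => (p n : ℝ) / n) atTop (𝓝 κ))
    (hpstep : ∀ᶠ n in atTop, p (n - 1) = p n - 1) (hppos : ∀ n, 0 < p n)
    -- weight functions
    (w : ℕ → ℝ → ℝ) (hwcont : ∀ n, ContinuousOn (w n) Sig)
    (hwnonneg : ∀ n, ∀ x ∈ Sig, 0 ≤ w n x)
    (wlim : ℝ → ℝ) (hwlimcont : ContinuousOn wlim Sig)
    (hwlimnonneg : ∀ x ∈ Sig, 0 ≤ wlim x)
    -- assumption (a1)
    (ha11 : {x ∈ Sig | wlim x = 0}.Finite)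
    (ha11' : ∀ᶠ n in atTop, {x ∈ Sig | w n x = 0} ⊆ {x ∈ Sig | wlim x = 0})
    (ha12 : ∀ K : Set ℝ, IsCompact K → K ⊆ Sig →
      TendstoUniformlyOn (fun n => w n) wlim atTop K ∧
      TendstoUniformlyOn (fun n x => Real.log (w n x)) (fun x => Real.log (wlim x)) atTop K)
    (ha13 : ∀ K : Set ℝ, IsCompact K → K ⊆ Sig → Disjoint K {x ∈ Sig | wlim x = 0} →
      ∃ C : NNReal, LipschitzOnWith C (fun x => Real.log (wlim x)) K)
    -- assumption (a2)
    (ha2 : ¬ Bornology.IsBounded Sig → ∃ n₀ : ℕ, ∃ ε > (0 : ℝ),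
      ∀ δ > (0 : ℝ), ∃ R : ℝ, ∀ x ∈ Sig, R ≤ |x| → ∀ n ≥ n₀,
        |x| ^ (((θ : ℝ) + 1) * (κ + ε)) * w n x ≤ δ)
    -- the eigenvalue distributions
    (Z : ℕ → ℝ) (hZpos : ∀ n, 0 < Z n)
    (P : (n : ℕ) → Measure (Fin (p n) → ℝ))
    (hP : ∀ n, P n = MeasureTheory.volume.withDensity fun lam =>
      ENNReal.ofReal (Set.indicator {v : Fin (p n) → ℝ | ∀ j, v j ∈ Sig}
        (fun v => (Z n)⁻¹ * vandTheta θ v * ∏ j, w n (v j) ^ n) lam))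
    (hPprob : ∀ n, IsProbabilityMeasure (P n))
    -- assumption (Z)
    (ξ : ℝ) (hξ : Tendsto (fun n : ℕ => (n : ℝ)⁻¹ * Real.log (Z (n - 1) / Z n)) atTop (𝓝 ξ))
    -- LDP for the empirical measures with speed n², good rate function J, unique minimiser μw
    (J : MeasureTheory.FiniteMeasure ℝ → ℝ≥0∞) (hJlsc : LowerSemicontinuous J)
    (hJgood : ∀ c : ℝ≥0∞, c ≠ ⊤ → IsCompact {μ : MeasureTheory.FiniteMeasure ℝ | J μ ≤ c})
    (hLDPup : ∀ F : Set (MeasureTheory.FiniteMeasure ℝ), IsClosed F →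
      Filter.limsup (fun n : ℕ => (((n : ℝ) ^ 2)⁻¹ : EReal) *
          ENNReal.log (P n {lam | empFM n lam ∈ F})) atTop
        ≤ - ⨅ μ ∈ F, (J μ : EReal))
    (hLDPlow : ∀ G : Set (MeasureTheory.FiniteMeasure ℝ), IsOpen G →
      - ⨅ μ ∈ G, (J μ : EReal) ≤
        Filter.liminf (fun n : ℕ => (((n : ℝ) ^ 2)⁻¹ : EReal) *
          ENNReal.log (P n {lam | empFM n lam ∈ G})) atTop)
    (μw : Measure ℝ) [IsProbabilityMeasure μw]
    (hμwcpt : IsCompact (closure (msupport μw))) (hμwSig : μw Sigᶜ = 0)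
    (hμwmin : J ⟨μw, inferInstance⟩ = 0 ∧
      ∀ μ : MeasureTheory.FiniteMeasure ℝ, J μ = 0 → μ = ⟨μw, inferInstance⟩)
    (bw : ℝ) (hbw : IsLUB (msupport μw) bw) :
    -- conclusion: for every x < bw, limsup (1/n) log P_n(λ_n* ≤ x) = -∞
    ∀ x : ℝ, x < bw →
      Filter.limsup (fun n : ℕ => ((n : ℝ)⁻¹ : EReal) *
        ENNReal.log (P n {lam | (⨆ j, lam j) ≤ x})) atTop = (⊥ : EReal) :=
  largest_eigenvalue_left_tail_general p P J hJlsc hJgood hLDPup μw hμwmin bw hbw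
end

section
/- (Chiral-ensemble integral, Equation (5.55)) For all real numbers 0 < a < b and x > √b: ∫_{√a}^{√b} 2x·√((y²−a)(b−y²)) / ((x²−y²)·y) dy = (π/x)·( x² − √((x²−a)(x²−b)) − √(ab) ). -/
/-!
Put `t = y²` and `Q = (t - a)(b - t)`. Since
`Q / (t (x² - t)) = 1 - ab / (x² t) - (x² - a)(x² - b) / (x² (x² - t))`,
the integrand `x √Q / (t (x² - t)) dt` is a combination of `dt / √Q`, `dt / (t √Q)` and
`dt / ((x² - t) √Q)`. The substitutions `s = t`, `1 / t`, `1 / (x² - t)` turn these into multiples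
of `ds / √((s - α)(β - s))`, where `[α, β]` is the image of `[a, b]`, and the primitive
`intervalArcsin α β` of the latter rises by `π` from `α` to `β`.
-/

open Real

noncomputable def intervalArcsin (α β s : ℝ) : ℝ := arcsin ((2 * s - α - β) / (β - α))

theorem intervalArcsin_left {α β : ℝ} (h : α ≠ β) : intervalArcsin α β α = -(π / 2) := by
  have : β - α ≠ 0 := sub_ne_zero.2 h.symm
  rw [intervalArcsin, ← arcsin_neg_one]
  congr 1
  field_simp
  ring

theorem intervalArcsin_right {α β : ℝ} (h : α ≠ β) : intervalArcsin α β β = π / 2 := by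
  have : β - α ≠ 0 := sub_ne_zero.2 h.symm
  rw [intervalArcsin, ← arcsin_one]
  congr 1
  field_simp
  ring

@[fun_prop]
theorem continuous_intervalArcsin (α β : ℝ) : Continuous (intervalArcsin α β) := by
  unfold intervalArcsin; fun_prop

theorem hasDerivAt_intervalArcsin {α β s w : ℝ} (hαβ : α < β) (hw : 0 < w)
    (hw2 : w ^ 2 = (s - α) * (β - s)) : HasDerivAt (intervalArcsin α β) w⁻¹ s := by
  have hβα : 0 < β - α := sub_pos.2 hαβ
  set u := (2 * s - α - β) / (β - α)
  have h1u : 1 - u ^ 2 = (2 * w / (β - α)) ^ 2 := by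
    simp only [u]
    field_simp
    linear_combination (-4) * hw2
  have hu : |u| < 1 := by
    rw [← sq_lt_one_iff_abs_lt_one]
    nlinarith [show 0 < (2 * w / (β - α)) ^ 2 by positivity]
  have hinner : HasDerivAt (fun s => (2 * s - α - β) / (β - α)) (2 / (β - α)) s := by
    simpa using ((((hasDerivAt_id s).const_mul 2).sub_const α).sub_const β).div_const (β - α)
  refine ((hasDerivAt_arcsin (abs_lt.1 hu).1.ne' (abs_lt.1 hu).2.ne).comp s hinner).congr_deriv ?_
  rw [h1u, sqrt_sq (by positivity)]
  field_simp

theorem hasDerivAt_intervalArcsin_sq {a b y : ℝ} (hay : a < y ^ 2) (hyb : y ^ 2 < b) :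
    HasDerivAt (fun y => intervalArcsin a b (y ^ 2)) (2 * y / √((y ^ 2 - a) * (b - y ^ 2))) y := by
  have hR : 0 < (y ^ 2 - a) * (b - y ^ 2) := mul_pos (by linarith) (by linarith)
  have hsq : HasDerivAt (fun y : ℝ => y ^ 2) (2 * y) y := by simpa using hasDerivAt_pow 2 y
  refine ((hasDerivAt_intervalArcsin (hay.trans hyb) (sqrt_pos.2 hR) (sq_sqrt hR.le)).comp
    (h := fun y => y ^ 2) y hsq).congr_deriv ?_
  field_simp

theorem hasDerivAt_intervalArcsin_inv_sq {a b y : ℝ} (ha : 0 < a) (hay : a < y ^ 2)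
    (hyb : y ^ 2 < b) :
    HasDerivAt (fun y => intervalArcsin b⁻¹ a⁻¹ (y ^ 2)⁻¹)
      (-(2 * √(a * b)) / (y * √((y ^ 2 - a) * (b - y ^ 2)))) y := by
  have hy : y ≠ 0 := by rintro rfl; linarith
  have hb : 0 < b := by linarith
  have hR : 0 < (y ^ 2 - a) * (b - y ^ 2) := mul_pos (by linarith) (by linarith)
  have hab : 0 < a * b := mul_pos ha hb
  have hw : 0 < √((y ^ 2 - a) * (b - y ^ 2)) / (y ^ 2 * √(a * b)) := by positivity
  have hw2 : (√((y ^ 2 - a) * (b - y ^ 2)) / (y ^ 2 * √(a * b))) ^ 2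
      = ((y ^ 2)⁻¹ - b⁻¹) * (a⁻¹ - (y ^ 2)⁻¹) := by
    rw [div_pow, mul_pow, sq_sqrt hR.le, sq_sqrt hab.le]
    field_simp
  have hsq : HasDerivAt (fun y : ℝ => y ^ 2) (2 * y) y := by simpa using hasDerivAt_pow 2 y
  refine ((hasDerivAt_intervalArcsin (inv_strictAnti₀ ha (hay.trans hyb)) hw hw2).comp y
    (hsq.inv (pow_ne_zero 2 hy))).congr_deriv ?_
  field_simp

theorem hasDerivAt_intervalArcsin_inv_sub_sq {a b c y : ℝ} (hay : a < y ^ 2) (hyb : y ^ 2 < b)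
    (hbc : b < c) :
    HasDerivAt (fun y => intervalArcsin (c - a)⁻¹ (c - b)⁻¹ (c - y ^ 2)⁻¹)
      (2 * y * √((c - a) * (c - b)) / ((c - y ^ 2) * √((y ^ 2 - a) * (b - y ^ 2)))) y := by
  have hca : 0 < c - a := by linarith
  have hcb : 0 < c - b := by linarith
  have hcy : 0 < c - y ^ 2 := by linarith
  have hR : 0 < (y ^ 2 - a) * (b - y ^ 2) := mul_pos (by linarith) (by linarith)
  have hD : 0 < (c - a) * (c - b) := mul_pos hca hcb
  have hw : 0 < √((y ^ 2 - a) * (b - y ^ 2)) / ((c - y ^ 2) * √((c - a) * (c - b))) := by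
    positivity
  have hw2 : (√((y ^ 2 - a) * (b - y ^ 2)) / ((c - y ^ 2) * √((c - a) * (c - b)))) ^ 2
      = ((c - y ^ 2)⁻¹ - (c - a)⁻¹) * ((c - b)⁻¹ - (c - y ^ 2)⁻¹) := by
    rw [div_pow, mul_pow, sq_sqrt hR.le, sq_sqrt hD.le]
    field_simp
    ring
  have hsq : HasDerivAt (fun y : ℝ => c - y ^ 2) (-(2 * y)) y := by
    simpa using (hasDerivAt_pow 2 y).const_sub c
  refine ((hasDerivAt_intervalArcsin (inv_strictAnti₀ hcb (by linarith)) hw hw2).comp y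
    (hsq.inv hcy.ne')).congr_deriv ?_
  field_simp

noncomputable def chiralPrimitive (a b x y : ℝ) : ℝ :=
  x * intervalArcsin a b (y ^ 2) + √(a * b) / x * intervalArcsin b⁻¹ a⁻¹ (y ^ 2)⁻¹
    - √((x ^ 2 - a) * (x ^ 2 - b)) / x *
      intervalArcsin (x ^ 2 - a)⁻¹ (x ^ 2 - b)⁻¹ (x ^ 2 - y ^ 2)⁻¹

theorem hasDerivAt_chiralPrimitive {a b x y : ℝ} (ha : 0 < a) (hay : a < y ^ 2) (hyb : y ^ 2 < b)
    (hbx : b < x ^ 2) :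
    HasDerivAt (chiralPrimitive a b x)
      (2 * x * √((y ^ 2 - a) * (b - y ^ 2)) / ((x ^ 2 - y ^ 2) * y)) y := by
  have hy : y ≠ 0 := by rintro rfl; linarith
  have hx : x ≠ 0 := by rintro rfl; linarith
  have hxy : x ^ 2 - y ^ 2 ≠ 0 := by linarith
  have hR : 0 < (y ^ 2 - a) * (b - y ^ 2) := mul_pos (by linarith) (by linarith)
  have hS : √(a * b) ^ 2 = a * b := sq_sqrt (by nlinarith)
  have hD : √((x ^ 2 - a) * (x ^ 2 - b)) ^ 2 = (x ^ 2 - a) * (x ^ 2 - b) := sq_sqrt (by nlinarith)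
  refine ((((hasDerivAt_intervalArcsin_sq hay hyb).const_mul x).add
    ((hasDerivAt_intervalArcsin_inv_sq ha hay hyb).const_mul (√(a * b) / x))).sub
    ((hasDerivAt_intervalArcsin_inv_sub_sq hay hyb hbx).const_mul
      (√((x ^ 2 - a) * (x ^ 2 - b)) / x))).congr_deriv ?_
  have hR0 : √((y ^ 2 - a) * (b - y ^ 2)) ≠ 0 := (sqrt_pos.2 hR).ne'
  field_simp
  rw [hS, hD, sq_sqrt hR.le]
  ring

theorem pos_and_sq_le_of_mem_Icc_sqrt {a b y : ℝ} (ha : 0 < a) (hy : y ∈ Set.Icc √a √b) :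
    0 < y ∧ y ^ 2 ≤ b :=
  have hy0 : 0 < y := (sqrt_pos.2 ha).trans_le hy.1
  ⟨hy0, (le_sqrt' hy0).1 hy.2⟩

theorem continuousOn_chiralPrimitive {a b x : ℝ} (ha : 0 < a) (hbx : b < x ^ 2) :
    ContinuousOn (chiralPrimitive a b x) (Set.Icc √a √b) := by
  intro y hy
  obtain ⟨hy0, hyb⟩ := pos_and_sq_le_of_mem_Icc_sqrt ha hy
  have hxy : x ^ 2 - y ^ 2 ≠ 0 := by linarith
  unfold chiralPrimitive
  fun_prop (disch := positivity)

theorem chiralPrimitive_sqrt_sub_sqrt {a b x : ℝ} (ha : 0 < a) (hab : a < b) (hbx : b < x ^ 2) :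
    chiralPrimitive a b x √b - chiralPrimitive a b x √a
      = π / x * (x ^ 2 - √((x ^ 2 - a) * (x ^ 2 - b)) - √(a * b)) := by
  have hb : 0 < b := ha.trans hab
  have hx : x ≠ 0 := by rintro rfl; linarith
  have hba : b⁻¹ < a⁻¹ := inv_strictAnti₀ ha hab
  have hAB : (x ^ 2 - a)⁻¹ < (x ^ 2 - b)⁻¹ := inv_strictAnti₀ (by linarith) (by linarith)
  simp only [chiralPrimitive, sq_sqrt ha.le, sq_sqrt hb.le, intervalArcsin_left,
    intervalArcsin_right, hab.ne, hba.ne, hAB.ne, ne_eq, not_false_eq_true]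
  field_simp
  ring

theorem chiral_ensemble_integral
    (a b x : ℝ) (ha : 0 < a) (hab : a < b) (hx : Real.sqrt b < x) :
    (∫ y in Real.sqrt a..Real.sqrt b,
        2 * x * Real.sqrt ((y ^ 2 - a) * (b - y ^ 2)) / ((x ^ 2 - y ^ 2) * y))
      = (π / x) * (x ^ 2 - Real.sqrt ((x ^ 2 - a) * (x ^ 2 - b)) - Real.sqrt (a * b)) := by
  have hx0 : 0 < x := (sqrt_nonneg b).trans_lt hx
  have hbx : b < x ^ 2 := (sqrt_lt' hx0).1 hx
  have hintegrand : ContinuousOn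
      (fun y => 2 * x * √((y ^ 2 - a) * (b - y ^ 2)) / ((x ^ 2 - y ^ 2) * y)) (Set.Icc √a √b) := by
    intro y hy
    obtain ⟨hy0, hyb⟩ := pos_and_sq_le_of_mem_Icc_sqrt ha hy
    have hxy : x ^ 2 - y ^ 2 ≠ 0 := by linarith
    fun_prop (disch := positivity)
  have hderiv : ∀ y ∈ Set.Ioo √a √b, HasDerivAt (chiralPrimitive a b x)
      (2 * x * √((y ^ 2 - a) * (b - y ^ 2)) / ((x ^ 2 - y ^ 2) * y)) y := by
    intro y ⟨hay, hyb⟩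
    have hy0 : 0 < y := (sqrt_nonneg a).trans_lt hay
    exact hasDerivAt_chiralPrimitive ha ((sqrt_lt' hy0).1 hay) ((lt_sqrt hy0.le).1 hyb) hbx
  have hle : √a ≤ √b := sqrt_le_sqrt hab.le
  rw [intervalIntegral.integral_eq_sub_of_hasDerivAt_of_le hle (continuousOn_chiralPrimitive ha hbx)
    hderiv (hintegrand.intervalIntegrable_of_Icc hle), chiralPrimitive_sqrt_sub_sqrt ha hab hbx]
end

section
/- (Mean of the limiting spectral density for disordered bosons, Section 3.1) Let b = 3√3 and define ρ_∞(t) = (1/(2π)) · (t/b)^{−1/3} · [ (1 + √(1 − t²/b²))^{1/3} − (1 − √(1 − t²/b²))^{1/3} ] for 0 < t ≤ b. Then ∫_0^{3√3} t · ρ_∞(t) dt = 3/2. -/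
/-! Scaling `t = 3√3 s` turns the mean into `27 / (2π)` times the integral over `[0, 1]` of
`s^{2/3} ((1 + √(1 - s²))^{1/3} - (1 - √(1 - s²))^{1/3})`. On `[0, 1/2]` the map
`x ↦ s = 2√(x(1 - x))` is increasing onto `[0, 1]` with `√(1 - s²) = 1 - 2x`, and it turns that
integrand into `2 (h x + h (1 - x))` with `h x = (1 - 2x) x^{-1/6} (1 - x)^{1/6}`. Folding the two
halves gives `2 ∫₀¹ h = 2 (B(5/6, 7/6) - 2 B(11/6, 7/6)) = π / 9`, the Beta values following from
`Γ(1/6) Γ(5/6) = 2π`, and `27 / (2π) · π / 9 = 3 / 2`. -/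

open Real MeasureTheory Set
open ProbabilityTheory (beta)

lemma ofReal_rpow_mul_one_sub_rpow {a b x : ℝ} (hx : x ∈ Icc (0:ℝ) 1) :
    ((x ^ (a - 1) * (1 - x) ^ (b - 1) : ℝ) : ℂ) =
      (x : ℂ) ^ ((a : ℂ) - 1) * (1 - (x : ℂ)) ^ ((b : ℂ) - 1) := by
  push_cast [Complex.ofReal_cpow hx.1, Complex.ofReal_cpow (sub_nonneg.2 hx.2)]
  rfl

theorem intervalIntegrable_rpow_mul_one_sub_rpow {a b : ℝ} (ha : 0 < a) (hb : 0 < b) :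
    IntervalIntegrable (fun x : ℝ => x ^ (a - 1) * (1 - x) ^ (b - 1)) volume 0 1 := by
  have h := (Complex.betaIntegral_convergent (u := a) (v := b) (by simpa) (by simpa)).1.re
  refine ⟨IntegrableOn.congr_fun h (fun x hx => ?_) measurableSet_Ioc, by simp⟩
  rw [← ofReal_rpow_mul_one_sub_rpow (Ioc_subset_Icc_self hx)]
  exact Complex.ofReal_re _

theorem integral_rpow_mul_one_sub_rpow {a b : ℝ} (ha : 0 < a) (hb : 0 < b) :
    ∫ x in (0:ℝ)..1, x ^ (a - 1) * (1 - x) ^ (b - 1) = beta a b := by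
  rw [ProbabilityTheory.beta_eq_betaIntegralReal a b ha hb, Complex.betaIntegral,
    ← intervalIntegral.integral_congr fun x hx => ofReal_rpow_mul_one_sub_rpow (a := a) (b := b)
      (by rwa [uIcc_of_le zero_le_one] at hx), intervalIntegral.integral_ofReal,
    Complex.ofReal_re]

lemma Gamma_one_sixth_mul_Gamma_five_sixths : Gamma (1 / 6) * Gamma (5 / 6) = 2 * π := by
  rw [show (5 / 6 : ℝ) = 1 - 1 / 6 by norm_num, Gamma_mul_Gamma_one_sub,
    show π * (1 / 6) = π / 6 by ring, sin_pi_div_six]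
  ring

lemma beta_five_sixths_seven_sixths : beta (5 / 6) (7 / 6) = π / 3 := by
  rw [beta, show (5 / 6 : ℝ) + 7 / 6 = 1 + 1 by norm_num, show (7 / 6 : ℝ) = 1 / 6 + 1 by norm_num,
    Gamma_add_one one_ne_zero, Gamma_add_one (by norm_num), Gamma_one]
  linear_combination Gamma_one_sixth_mul_Gamma_five_sixths / 6

lemma beta_eleven_sixths_seven_sixths : beta (11 / 6) (7 / 6) = 5 * π / 36 := by
  rw [beta, show (11 / 6 : ℝ) + 7 / 6 = 2 + 1 by norm_num, show (7 / 6 : ℝ) = 1 / 6 + 1 by norm_num,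
    show (11 / 6 : ℝ) = 5 / 6 + 1 by norm_num, Gamma_add_one two_ne_zero,
    Gamma_add_one (by norm_num), Gamma_add_one (by norm_num), Gamma_two]
  linear_combination 5 * Gamma_one_sixth_mul_Gamma_five_sixths / 72

lemma integral_to_midpoint_add_comp_add_sub {E : Type*} [NormedAddCommGroup E]
    [NormedSpace ℝ E] {f : ℝ → E} {a b : ℝ} (hf : IntervalIntegrable f volume a b) :
    ∫ x in a..(a + b) / 2, (f x + f (a + b - x)) = ∫ x in a..b, f x := by
  have hmid : (a + b) / 2 ∈ uIcc a b := by
    rcases le_total a b with h | h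
    · exact mem_uIcc.2 (Or.inl ⟨by linarith, by linarith⟩)
    · exact mem_uIcc.2 (Or.inr ⟨by linarith, by linarith⟩)
  have hleft := hf.mono_set (uIcc_subset_uIcc_left hmid)
  have hright := hf.mono_set (uIcc_subset_uIcc_right hmid)
  have hreflect := hright.comp_sub_left (a + b)
  rw [show a + b - (a + b) / 2 = (a + b) / 2 by ring, add_sub_cancel_right] at hreflect
  rw [intervalIntegral.integral_add hleft hreflect.symm, intervalIntegral.integral_comp_sub_left,
    show a + b - (a + b) / 2 = (a + b) / 2 by ring, add_sub_cancel_left,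
    intervalIntegral.integral_add_adjacent_intervals hleft hright]

lemma sqrt_one_sub_sq_two_mul_sqrt {x : ℝ} (h0 : 0 ≤ x) (h : x ≤ 1 / 2) :
    √(1 - (2 * √(x * (1 - x))) ^ 2) = 1 - 2 * x := by
  rw [mul_pow, sq_sqrt (by nlinarith), show 1 - 2 ^ 2 * (x * (1 - x)) = (1 - 2 * x) ^ 2 by ring,
    sqrt_sq (by linarith)]

lemma hasDerivAt_two_mul_sqrt_mul_one_sub {x : ℝ} (hx : x * (1 - x) ≠ 0) :
    HasDerivAt (fun y => 2 * √(y * (1 - y))) ((1 - 2 * x) / √(x * (1 - x))) x := by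
  refine ((((hasDerivAt_id' x).fun_mul ((hasDerivAt_id' x).const_sub 1)).sqrt hx).const_mul 2
    ).congr_deriv ?_
  field_simp
  ring

lemma rpow_neg_one_sixth_mul_rpow_one_third {y : ℝ} (hy : 0 ≤ y) :
    y ^ (-(1 / 6) : ℝ) * y ^ (1 / 3 : ℝ) = y ^ (1 / 6 : ℝ) := by
  rw [← rpow_add' hy (by norm_num)]
  norm_num

lemma two_mul_sqrt_rpow_two_thirds_mul_div {u : ℝ} (hu : 0 < u) :
    (2 * √u) ^ (2 / 3 : ℝ) * 2 ^ (1 / 3 : ℝ) / √u = 2 * u ^ (-(1 / 6) : ℝ) := by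
  rw [mul_rpow zero_le_two (sqrt_nonneg u), sqrt_eq_rpow, ← rpow_mul hu.le, mul_right_comm,
    ← rpow_add two_pos, div_eq_mul_inv, ← rpow_neg hu.le, mul_assoc, ← rpow_add hu]
  norm_num

noncomputable def tiltedBetaIntegrand (x : ℝ) : ℝ :=
  (1 - 2 * x) * (x ^ (-(1 / 6) : ℝ) * (1 - x) ^ (1 / 6 : ℝ))

lemma intervalIntegrable_tiltedBetaIntegrand :
    IntervalIntegrable tiltedBetaIntegrand volume 0 1 := by
  have hw := intervalIntegrable_rpow_mul_one_sub_rpow (a := 5 / 6) (b := 7 / 6)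
    (by norm_num) (by norm_num)
  norm_num at hw
  exact hw.continuousOn_mul (by fun_prop)

lemma integral_tiltedBetaIntegrand : ∫ x in (0:ℝ)..1, tiltedBetaIntegrand x = π / 18 := by
  have hw := intervalIntegrable_rpow_mul_one_sub_rpow (a := 5 / 6) (b := 7 / 6)
    (by norm_num) (by norm_num)
  have hw' := integral_rpow_mul_one_sub_rpow (a := 5 / 6) (b := 7 / 6) (by norm_num) (by norm_num)
  have hxw := integral_rpow_mul_one_sub_rpow (a := 11 / 6) (b := 7 / 6) (by norm_num) (by norm_num)
  norm_num at hw hw' hxw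
  have hmul : ∀ x ∈ uIcc (0:ℝ) 1, x * (x ^ (-(1 / 6) : ℝ) * (1 - x) ^ (1 / 6 : ℝ)) =
      x ^ (5 / 6 : ℝ) * (1 - x) ^ (1 / 6 : ℝ) := fun x hx => by
    rw [uIcc_of_le zero_le_one] at hx
    rw [← mul_assoc, mul_comm x, ← rpow_add_one' hx.1 (by norm_num)]
    norm_num
  simp_rw [tiltedBetaIntegrand, sub_mul, one_mul, mul_assoc (2 : ℝ)]
  rw [intervalIntegral.integral_sub hw ((hw.continuousOn_mul (by fun_prop)).const_mul 2),
    intervalIntegral.integral_const_mul, intervalIntegral.integral_congr hmul, hw', hxw,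
    beta_five_sixths_seven_sixths, beta_eleven_sixths_seven_sixths]
  ring

noncomputable def bosonProfile (s : ℝ) : ℝ :=
  s ^ (2 / 3 : ℝ) * ((1 + √(1 - s ^ 2)) ^ (1 / 3 : ℝ) - (1 - √(1 - s ^ 2)) ^ (1 / 3 : ℝ))

lemma continuous_bosonProfile : Continuous bosonProfile := by
  unfold bosonProfile
  fun_prop (disch := norm_num)

lemma bosonProfile_two_mul_sqrt_mul_deriv {x : ℝ} (h0 : 0 < x) (h : x ≤ 1 / 2) :
    bosonProfile (2 * √(x * (1 - x))) * ((1 - 2 * x) / √(x * (1 - x))) =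
      2 * (tiltedBetaIntegrand x + tiltedBetaIntegrand (1 - x)) := by
  have h1 : 0 < 1 - x := by linarith
  have key := two_mul_sqrt_rpow_two_thirds_mul_div (mul_pos h0 h1)
  rw [mul_rpow h0.le h1.le] at key
  unfold bosonProfile tiltedBetaIntegrand
  rw [sqrt_one_sub_sq_two_mul_sqrt h0.le h, show 1 + (1 - 2 * x) = 2 * (1 - x) by ring,
    show 1 - (1 - 2 * x) = 2 * x by ring, sub_sub_cancel,
    mul_rpow zero_le_two h1.le, mul_rpow zero_le_two h0.le]
  linear_combination (1 - 2 * x) * ((1 - x) ^ (1 / 3 : ℝ) - x ^ (1 / 3 : ℝ)) * key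
    + 2 * (1 - 2 * x) * x ^ (-(1 / 6) : ℝ) * rpow_neg_one_sixth_mul_rpow_one_third h1.le
    - 2 * (1 - 2 * x) * (1 - x) ^ (-(1 / 6) : ℝ) * rpow_neg_one_sixth_mul_rpow_one_third h0.le

lemma integral_bosonProfile_eq_integral_fold :
    ∫ s in (0:ℝ)..1, bosonProfile s =
      ∫ x in (0:ℝ)..1 / 2, 2 * (tiltedBetaIntegrand x + tiltedBetaIntegrand (1 - x)) := by
  set F : ℝ → ℝ := fun x => 2 * √(x * (1 - x))
  have hF : Continuous F := by fun_prop
  have hh := intervalIntegrable_tiltedBetaIntegrand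
  have hhalf : uIcc (0:ℝ) (1 / 2) ⊆ uIcc 0 1 := uIcc_subset_uIcc_left (by norm_num)
  have hfold : IntervalIntegrable (fun x => 2 * (tiltedBetaIntegrand x +
      tiltedBetaIntegrand (1 - x))) volume 0 (1 / 2) := by
    have hreflect : IntervalIntegrable (fun x => tiltedBetaIntegrand (1 - x)) volume 0 1 := by
      simpa using (hh.comp_sub_left 1).symm
    exact ((hh.mono_set hhalf).add (hreflect.mono_set hhalf)).const_mul 2
  have hpoint : ∀ x ∈ Ioc (0:ℝ) (1 / 2), (bosonProfile ∘ F) x * ((1 - 2 * x) / √(x * (1 - x))) =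
      2 * (tiltedBetaIntegrand x + tiltedBetaIntegrand (1 - x)) :=
    fun x hx => bosonProfile_two_mul_sqrt_mul_deriv hx.1 hx.2
  have hsubst := intervalIntegral.integral_comp_mul_deriv''' (a := 0) (b := 1 / 2)
    (f' := fun x => (1 - 2 * x) / √(x * (1 - x))) hF.continuousOn
    (fun x hx => (hasDerivAt_two_mul_sqrt_mul_one_sub
      (by norm_num at hx; nlinarith [hx.1, hx.2])).hasDerivWithinAt)
    continuous_bosonProfile.continuousOn
    (continuous_bosonProfile.continuousOn.integrableOn_compact (isCompact_uIcc.image hF))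
    (by
      rw [uIcc_of_le (by norm_num), integrableOn_Icc_iff_integrableOn_Ioc]
      exact hfold.1.congr_fun (fun x hx => (hpoint x hx).symm) measurableSet_Ioc)
  have hF0 : F 0 = 0 := by simp [F]
  have hF1 : F (1 / 2) = 1 := by norm_num [F, show (1 / 2 : ℝ) * (1 / 2) = (1 / 2) ^ 2 by norm_num]
  rw [hF0, hF1] at hsubst
  rw [← hsubst]
  exact intervalIntegral.integral_congr_ae
    (ae_of_all _ fun x hx => hpoint x (by simpa using hx))

theorem integral_bosonProfile : ∫ s in (0:ℝ)..1, bosonProfile s = π / 9 := by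
  have hfold := integral_to_midpoint_add_comp_add_sub intervalIntegrable_tiltedBetaIntegrand
  simp only [zero_add] at hfold
  rw [integral_bosonProfile_eq_integral_fold, intervalIntegral.integral_const_mul, hfold,
    integral_tiltedBetaIntegrand]
  ring

lemma mul_density_eq_bosonProfile {b t : ℝ} (hb : 0 < b) (ht : 0 ≤ t) :
    t * ((1 / (2 * π)) * (t / b) ^ (-(1 : ℝ) / 3) *
        ((1 + √(1 - t ^ 2 / b ^ 2)) ^ ((1 : ℝ) / 3) - (1 - √(1 - t ^ 2 / b ^ 2)) ^ ((1 : ℝ) / 3)))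
      = b / (2 * π) * bosonProfile (t / b) := by
  have hs : t / b * (t / b) ^ (-(1 : ℝ) / 3) = (t / b) ^ (2 / 3 : ℝ) := by
    rw [mul_comm, ← rpow_add_one' (div_nonneg ht hb.le) (by norm_num)]
    norm_num
  rw [bosonProfile, div_pow, ← hs]
  field_simp

lemma integral_mul_density_eq {b : ℝ} (hb : 0 < b) :
    ∫ t in (0:ℝ)..b, t * ((1 / (2 * π)) * (t / b) ^ (-(1 : ℝ) / 3) *
        ((1 + √(1 - t ^ 2 / b ^ 2)) ^ ((1 : ℝ) / 3) - (1 - √(1 - t ^ 2 / b ^ 2)) ^ ((1 : ℝ) / 3)))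
      = b ^ 2 / (2 * π) * ∫ s in (0:ℝ)..1, bosonProfile s := by
  rw [intervalIntegral.integral_congr fun t ht => mul_density_eq_bosonProfile hb
      (by rw [uIcc_of_le hb.le] at ht; exact ht.1),
    intervalIntegral.integral_const_mul, intervalIntegral.integral_comp_div _ hb.ne', zero_div,
    div_self hb.ne', smul_eq_mul]
  ring

theorem boson_limiting_density_mean :
    (∫ t in (0 : ℝ)..(3 * Real.sqrt 3),
        t * ((1 / (2 * π)) * (t / (3 * Real.sqrt 3)) ^ (-(1 : ℝ) / 3) *
          ((1 + Real.sqrt (1 - t ^ 2 / (3 * Real.sqrt 3) ^ 2)) ^ ((1 : ℝ) / 3)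
            - (1 - Real.sqrt (1 - t ^ 2 / (3 * Real.sqrt 3) ^ 2)) ^ ((1 : ℝ) / 3))))
      = 3 / 2 := by
  rw [integral_mul_density_eq (by positivity), integral_bosonProfile, mul_pow,
    sq_sqrt zero_le_three]
  field_simp
  norm_num
end
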